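/- arXiv:2002.10396 — 2 statements merged into one kernel-verified Lean document; each statement's English description precedes it below -/
import Mathlib

section
/- Let p ∈ (1,∞) and let X be a real Banach space that satisfies the hypercube Stein inequality with constant 𝔰 for exponent p and the hypercube UMD⁻ inequality with constant β for exponent p. Then for every positive integer n and all functions f_1,…,f_n : 𝒞_n → X, one has ‖Σ_{i=1}^n (𝔈_i f_i − 𝔈_{i−1} f_i)‖_{L_p(𝒞_n;X)} ≤ 𝔰 β (2^{−n} Σ_{δ∈𝒞_n} ‖Σ_{i=1}^n δ_i ∂_i f_i‖_{L_p(𝒞_n;X)}^p)^{1/p}. -/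
noncomputable section

open Finset

/-- The sign `±1` attached to a boolean coordinate of the discrete cube. -/
def sgn (b : Bool) : ℝ := if b then 1 else -1

variable {X : Type*} [NormedAddCommGroup X] [NormedSpace ℝ X]

/-- `L_p` norm of `f : 𝒞_n → X` with respect to the uniform probability measure. -/
def cubeLpNorm (n : ℕ) (p : ℝ) (f : (Fin n → Bool) → X) : ℝ :=
  (((2 : ℝ) ^ n)⁻¹ * ∑ ε : Fin n → Bool, ‖f ε‖ ^ p) ^ (1 / p)

/-- Conditional expectation given the coordinates in `S`: average of `f η` over all
`η` agreeing with `ε` on `S`. -/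
def cubeCondExp (n : ℕ) (S : Finset (Fin n)) (f : (Fin n → Bool) → X) :
    (Fin n → Bool) → X := fun ε =>
  ((2 : ℝ) ^ (n - S.card))⁻¹ •
    ∑ η ∈ univ.filter (fun η : Fin n → Bool => ∀ j ∈ S, η j = ε j), f η

/-- The set of the first `i` coordinates (`0`-based). -/
def firstIdx (n i : ℕ) : Finset (Fin n) := univ.filter fun j => (j : ℕ) < i

/-- `𝔈_i`: conditioning on the first `i` coordinates. -/
def Ei (n i : ℕ) (f : (Fin n → Bool) → X) : (Fin n → Bool) → X :=
  cubeCondExp n (firstIdx n i) f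

/-- `𝔈_i^π`: conditioning on the coordinates `π(1),…,π(i)`. -/
def Epi (n : ℕ) (π : Equiv.Perm (Fin n)) (i : ℕ) (f : (Fin n → Bool) → X) :
    (Fin n → Bool) → X :=
  cubeCondExp n ((firstIdx n i).image π) f

/-- `∂_i`: the `i`-th discrete partial derivative. -/
def cubeDeriv (n : ℕ) (i : Fin n) (f : (Fin n → Bool) → X) : (Fin n → Bool) → X :=
  fun ε => (2 : ℝ)⁻¹ • (f ε - f (Function.update ε i (!(ε i))))

/-- `X` satisfies the hypercube Stein inequality with constant `s` for exponent `p`. -/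
def SteinIneq (X : Type*) [NormedAddCommGroup X] [NormedSpace ℝ X] (p s : ℝ) : Prop :=
  ∀ m : ℕ, 0 < m → ∀ (π : Equiv.Perm (Fin m)) (g : Fin m → (Fin m → Bool) → X),
    (((2 : ℝ) ^ m)⁻¹ * ∑ δ : Fin m → Bool,
        (cubeLpNorm m p fun ε => ∑ i : Fin m, sgn (δ i) • Epi m π ((i : ℕ) + 1) (g i) ε) ^ p) ^ (1 / p)
      ≤ s * (((2 : ℝ) ^ m)⁻¹ * ∑ δ : Fin m → Bool,
        (cubeLpNorm m p fun ε => ∑ i : Fin m, sgn (δ i) • g i ε) ^ p) ^ (1 / p)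

/-- `X` satisfies the hypercube UMD⁻ inequality with constant `b` for exponent `p`. -/
def UMDminusIneq (X : Type*) [NormedAddCommGroup X] [NormedSpace ℝ X] (p b : ℝ) : Prop :=
  ∀ m : ℕ, 0 < m → ∀ (π : Equiv.Perm (Fin m)) (d : Fin m → (Fin m → Bool) → X),
    (∀ i : Fin m, Epi m π ((i : ℕ) + 1) (d i) = d i ∧ Epi m π (i : ℕ) (d i) = 0) →
    cubeLpNorm m p (fun ε => ∑ i : Fin m, d i ε)
      ≤ b * (((2 : ℝ) ^ m)⁻¹ * ∑ δ : Fin m → Bool,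
        (cubeLpNorm m p fun ε => ∑ i : Fin m, sgn (δ i) • d i ε) ^ p) ^ (1 / p)

/-- The Walsh function `w_A`. -/
def walsh (n : ℕ) (A : Finset (Fin n)) (ε : Fin n → Bool) : ℝ := ∏ i ∈ A, sgn (ε i)

/-- The Walsh coefficient `f̂(A)`. -/
def walshCoeff (n : ℕ) (f : (Fin n → Bool) → X) (A : Finset (Fin n)) : X :=
  ((2 : ℝ) ^ n)⁻¹ • ∑ ε : Fin n → Bool, walsh n A ε • f ε

/-- `Δ⁻¹∂_i f = Σ_{A ∋ i} |A|⁻¹ f̂(A) w_A`. -/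
def invLapDeriv (n : ℕ) (i : Fin n) (f : (Fin n → Bool) → X) : (Fin n → Bool) → X :=
  fun ε => ∑ A ∈ univ.filter (fun A : Finset (Fin n) => i ∈ A),
    ((A.card : ℝ)⁻¹ * walsh n A ε) • walshCoeff n f A

section Aux

variable {n : ℕ}

lemma sgn_mul_self (b : Bool) : sgn b * sgn b = 1 := by cases b <;> norm_num [sgn]

lemma sgn_not (b : Bool) : sgn (!b) = -sgn b := by cases b <;> simp [sgn]

lemma walsh_mul (A B : Finset (Fin n)) (ε : Fin n → Bool) :
    walsh n A ε * walsh n B ε = walsh n ((A \ B) ∪ (B \ A)) ε := by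
  classical
  have hA : A = (A \ B) ∪ (A ∩ B) := (Finset.sdiff_union_inter A B).symm
  have hB : B = (B \ A) ∪ (A ∩ B) := by
    rw [Finset.inter_comm]; exact (Finset.sdiff_union_inter B A).symm
  unfold walsh
  rw [Finset.prod_union disjoint_sdiff_sdiff]
  have pA : (∏ i ∈ A, sgn (ε i)) = (∏ i ∈ A \ B, sgn (ε i)) * ∏ i ∈ A ∩ B, sgn (ε i) := by
    rw [← Finset.prod_union (Finset.disjoint_sdiff_inter A B), Finset.sdiff_union_inter]
  have pB : (∏ i ∈ B, sgn (ε i)) = (∏ i ∈ B \ A, sgn (ε i)) * ∏ i ∈ A ∩ B, sgn (ε i) := by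
    rw [← Finset.prod_union (by rw [Finset.inter_comm]; exact Finset.disjoint_sdiff_inter B A),
      Finset.inter_comm, Finset.sdiff_union_inter]
  rw [pA, pB]
  have hw : (∏ i ∈ A ∩ B, sgn (ε i)) * (∏ i ∈ A ∩ B, sgn (ε i)) = 1 := by
    rw [← Finset.prod_mul_distrib]
    simp [sgn_mul_self]
  calc (∏ i ∈ A \ B, sgn (ε i)) * (∏ i ∈ A ∩ B, sgn (ε i)) *
        ((∏ i ∈ B \ A, sgn (ε i)) * (∏ i ∈ A ∩ B, sgn (ε i)))
      = (∏ i ∈ A \ B, sgn (ε i)) * (∏ i ∈ B \ A, sgn (ε i)) *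
        ((∏ i ∈ A ∩ B, sgn (ε i)) * (∏ i ∈ A ∩ B, sgn (ε i))) := by ring
    _ = (∏ i ∈ A \ B, sgn (ε i)) * (∏ i ∈ B \ A, sgn (ε i)) := by rw [hw, mul_one]

lemma sum_walsh (C : Finset (Fin n)) :
    ∑ ε : Fin n → Bool, walsh n C ε = if C = ∅ then (2:ℝ)^n else 0 := by
  classical
  have h1 : ∀ ε : Fin n → Bool, walsh n C ε
      = ∏ i : Fin n, (if i ∈ C then sgn (ε i) else 1) := by
    intro ε
    rw [Finset.prod_ite_mem univ C fun i => sgn (ε i), Finset.univ_inter]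
    rfl
  simp only [h1]
  rw [← Fintype.piFinset_univ,
    Finset.sum_prod_piFinset (univ : Finset Bool) (fun i b => if i ∈ C then sgn b else 1)]
  have h2 : ∀ i : Fin n, (∑ b : Bool, (if i ∈ C then sgn b else 1)) = if i ∈ C then 0 else 2 := by
    intro i; by_cases hi : i ∈ C <;> simp [hi, sgn]
  rw [Finset.prod_congr rfl fun i _ => h2 i]
  by_cases hC : C = ∅
  · simp [hC]
  · obtain ⟨i, hi⟩ := Finset.nonempty_iff_ne_empty.mpr hC
    rw [if_neg hC]
    exact Finset.prod_eq_zero (Finset.mem_univ i) (by simp [hi])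

lemma sum_walsh_mul_walsh (A B : Finset (Fin n)) :
    ∑ ε : Fin n → Bool, walsh n A ε * walsh n B ε = if A = B then (2:ℝ)^n else 0 := by
  simp only [walsh_mul]
  rw [sum_walsh]
  by_cases h : A = B
  · simp [h]
  · rw [if_neg h, if_neg]
    intro hcon
    rw [Finset.union_eq_empty] at hcon
    exact h (Finset.Subset.antisymm (Finset.sdiff_eq_empty_iff_subset.mp hcon.1)
      (Finset.sdiff_eq_empty_iff_subset.mp hcon.2))

lemma sum_walsh_pointwise (ε η : Fin n → Bool) :
    ∑ A : Finset (Fin n), walsh n A ε * walsh n A η = if ε = η then (2:ℝ)^n else 0 := by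
  classical
  have key : ∑ A : Finset (Fin n), walsh n A ε * walsh n A η
      = ∏ i : Fin n, (sgn (ε i) * sgn (η i) + 1) := by
    rw [Finset.prod_add, Finset.powerset_univ]
    refine (Finset.sum_congr rfl fun A _ => ?_).symm
    rw [Finset.prod_const_one, mul_one, Finset.prod_mul_distrib]
    rfl
  rw [key]
  by_cases h : ε = η
  · subst h
    rw [if_pos rfl]
    have h2 : ∀ i : Fin n, sgn (ε i) * sgn (ε i) + 1 = 2 := fun i => by
      rw [sgn_mul_self]; norm_num
    rw [Finset.prod_congr rfl fun i _ => h2 i, Finset.prod_const]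
    simp
  · rw [if_neg h]
    have h2 : ∃ i, ε i ≠ η i := by
      by_contra hc; push_neg at hc; exact h (funext hc)
    obtain ⟨i, hi⟩ := h2
    refine Finset.prod_eq_zero (Finset.mem_univ i) ?_
    cases hε : ε i <;> cases hη : η i <;> simp_all [sgn] <;> norm_num

lemma walsh_inversion (f : (Fin n → Bool) → X) (ε : Fin n → Bool) :
    ∑ A : Finset (Fin n), walsh n A ε • walshCoeff n f A = f ε := by
  classical
  unfold walshCoeff
  have h1 : ∀ A : Finset (Fin n),
      walsh n A ε • (((2:ℝ)^n)⁻¹ • ∑ η : Fin n → Bool, walsh n A η • f η)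
        = ((2:ℝ)^n)⁻¹ • ∑ η : Fin n → Bool, (walsh n A ε * walsh n A η) • f η := by
    intro A
    rw [smul_comm]
    congr 1
    rw [Finset.smul_sum]
    exact Finset.sum_congr rfl fun η _ => smul_smul _ _ _
  simp only [h1]
  rw [← Finset.smul_sum, Finset.sum_comm]
  have h2 : ∀ η : Fin n → Bool, ∑ A : Finset (Fin n), (walsh n A ε * walsh n A η) • f η
      = (if ε = η then (2:ℝ)^n else 0) • f η := by
    intro η; rw [← Finset.sum_smul, sum_walsh_pointwise]
  rw [Finset.sum_congr rfl fun η _ => h2 η]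
  simp only [ite_smul, zero_smul]
  rw [Finset.sum_ite_eq]
  simp [smul_smul, inv_mul_cancel₀ (show ((2:ℝ)^n) ≠ 0 by positivity)]

lemma filter_sum_walsh (S A : Finset (Fin n)) (ε : Fin n → Bool) :
    ∑ η ∈ univ.filter (fun η : Fin n → Bool => ∀ j ∈ S, η j = ε j), walsh n A η
      = if A ⊆ S then (2:ℝ)^(n - S.card) * walsh n A ε else 0 := by
  classical
  rw [Finset.sum_filter]
  have h1 : ∀ η : Fin n → Bool,
      (if (∀ j ∈ S, η j = ε j) then walsh n A η else 0)
        = ∏ i : Fin n, ((if i ∈ S then (if η i = ε i then (1:ℝ) else 0) else 1)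
            * (if i ∈ A then sgn (η i) else 1)) := by
    intro η
    rw [Finset.prod_mul_distrib, Finset.prod_ite_mem univ S, Finset.univ_inter,
      Finset.prod_boole, Finset.prod_ite_mem univ A, Finset.univ_inter]
    by_cases hP : ∀ j ∈ S, η j = ε j <;> simp [hP, walsh]
  rw [Finset.sum_congr rfl fun η _ => h1 η]
  rw [← Fintype.piFinset_univ,
    Finset.sum_prod_piFinset (univ : Finset Bool)
      (fun i b => (if i ∈ S then (if b = ε i then (1:ℝ) else 0) else 1)
        * (if i ∈ A then sgn b else 1))]
  have h2 : ∀ i : Fin n,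
      (∑ b : Bool, ((if i ∈ S then (if b = ε i then (1:ℝ) else 0) else 1)
        * (if i ∈ A then sgn b else 1)))
      = if i ∈ S then (if i ∈ A then sgn (ε i) else 1) else (if i ∈ A then 0 else 2) := by
    intro i
    by_cases hS : i ∈ S <;> by_cases hA : i ∈ A <;> cases hε : ε i <;>
      simp [hS, hA, hε, sgn] <;> norm_num
  rw [Finset.prod_congr rfl fun i _ => h2 i]
  by_cases hAS : A ⊆ S
  · rw [if_pos hAS, ← Finset.prod_mul_prod_compl S]
    have hc : ∀ i ∈ Sᶜ, (if i ∈ S then (if i ∈ A then sgn (ε i) else 1)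
        else (if i ∈ A then (0:ℝ) else 2)) = 2 := by
      intro i hi
      have hiS : i ∉ S := Finset.mem_compl.mp hi
      rw [if_neg hiS, if_neg (fun hiA => hiS (hAS hiA))]
    have hs' : ∀ i ∈ S, (if i ∈ S then (if i ∈ A then sgn (ε i) else 1)
        else (if i ∈ A then (0:ℝ) else 2)) = (if i ∈ A then sgn (ε i) else 1) :=
      fun i hi => if_pos hi
    rw [Finset.prod_congr rfl hc, Finset.prod_congr rfl hs', Finset.prod_const,
      Finset.prod_ite_mem S A, Finset.inter_eq_right.mpr hAS, Finset.card_compl,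
      Fintype.card_fin, mul_comm]
    rfl
  · rw [if_neg hAS]
    obtain ⟨i, hiA, hiS⟩ := Finset.not_subset.mp hAS
    exact Finset.prod_eq_zero (Finset.mem_univ i) (by simp [hiS, hiA])

lemma condExp_walsh_smul_sum (S : Finset (Fin n)) (c : Finset (Fin n) → X) :
    cubeCondExp n S (fun ε => ∑ A : Finset (Fin n), walsh n A ε • c A)
      = fun ε => ∑ A : Finset (Fin n), if A ⊆ S then walsh n A ε • c A else 0 := by
  funext ε
  simp only [cubeCondExp]
  rw [Finset.sum_comm, Finset.smul_sum]
  refine Finset.sum_congr rfl fun A _ => ?_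
  rw [← Finset.sum_smul, filter_sum_walsh]
  by_cases hAS : A ⊆ S
  · rw [if_pos hAS, if_pos hAS, smul_smul,
      inv_mul_cancel_left₀ (show ((2:ℝ)^(n - S.card)) ≠ 0 by positivity)]
  · rw [if_neg hAS, if_neg hAS, zero_smul, smul_zero]

lemma condExp_ite_sum (S : Finset (Fin n)) (P : Finset (Fin n) → Prop) [DecidablePred P]
    (c : Finset (Fin n) → X) :
    cubeCondExp n S (fun ε => ∑ A : Finset (Fin n), if P A then walsh n A ε • c A else 0)
      = fun ε => ∑ A : Finset (Fin n), if P A ∧ A ⊆ S then walsh n A ε • c A else 0 := by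
  funext ε
  simp only [cubeCondExp]
  rw [Finset.sum_comm, Finset.smul_sum]
  refine Finset.sum_congr rfl fun A _ => ?_
  by_cases hP : P A
  · simp only [if_pos hP]
    rw [← Finset.sum_smul, filter_sum_walsh]
    by_cases hAS : A ⊆ S
    · rw [if_pos hAS, if_pos ⟨hP, hAS⟩, smul_smul,
        inv_mul_cancel_left₀ (show ((2:ℝ)^(n - S.card)) ≠ 0 by positivity)]
    · rw [if_neg hAS, if_neg (fun hc => hAS hc.2), zero_smul, smul_zero]
  · simp [hP]

lemma condExp_rep (S : Finset (Fin n)) (f : (Fin n → Bool) → X) :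
    cubeCondExp n S f
      = fun ε => ∑ A : Finset (Fin n), if A ⊆ S then walsh n A ε • walshCoeff n f A else 0 := by
  have hf : f = fun ε => ∑ A : Finset (Fin n), walsh n A ε • walshCoeff n f A :=
    funext fun ε => (walsh_inversion f ε).symm
  conv_lhs => rw [hf]
  exact condExp_walsh_smul_sum S (walshCoeff n f)

lemma condExp_condExp (S T : Finset (Fin n)) (f : (Fin n → Bool) → X) :
    cubeCondExp n S (cubeCondExp n T f) = cubeCondExp n (S ∩ T) f := by
  classical
  rw [condExp_rep T f,
    condExp_ite_sum S (fun A => A ⊆ T) (walshCoeff n f),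
    condExp_rep (S ∩ T) f]
  funext ε
  refine Finset.sum_congr rfl fun A _ => ?_
  refine if_congr ?_ rfl rfl
  rw [Finset.subset_inter_iff]
  exact ⟨fun h => ⟨h.2, h.1⟩, fun h => ⟨h.2, h.1⟩⟩

lemma sum_flip {M : Type*} [AddCommMonoid M] (i : Fin n) (F : (Fin n → Bool) → M) :
    ∑ ε : Fin n → Bool, F (Function.update ε i (!(ε i))) = ∑ ε : Fin n → Bool, F ε := by
  have hinv : Function.Involutive (fun ε : Fin n → Bool => Function.update ε i (!(ε i))) := by
    intro ε
    funext j
    by_cases hj : j = i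
    · subst hj; simp
    · simp [Function.update_of_ne hj]
  exact Fintype.sum_equiv hinv.toPerm _ _ fun ε => rfl

lemma walsh_flip (A : Finset (Fin n)) (i : Fin n) (ε : Fin n → Bool) :
    walsh n A (Function.update ε i (!(ε i))) = (if i ∈ A then (-1:ℝ) else 1) * walsh n A ε := by
  by_cases hi : i ∈ A
  · rw [if_pos hi]
    unfold walsh
    rw [← Finset.prod_erase_mul A (fun j => sgn (Function.update ε i (!(ε i)) j)) hi,
      ← Finset.prod_erase_mul A (fun j => sgn (ε j)) hi]
    have h1 : ∀ j ∈ A.erase i, sgn (Function.update ε i (!(ε i)) j) = sgn (ε j) := fun j hj => by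
      rw [Function.update_of_ne (Finset.ne_of_mem_erase hj)]
    rw [Finset.prod_congr rfl h1, Function.update_self, sgn_not]
    ring
  · rw [if_neg hi, one_mul]
    unfold walsh
    refine Finset.prod_congr rfl fun j hj => ?_
    rw [Function.update_of_ne (fun h => hi (by rw [← h]; exact hj))]

lemma walshCoeff_deriv (i : Fin n) (g : (Fin n → Bool) → X) (A : Finset (Fin n)) :
    walshCoeff n (cubeDeriv n i g) A = if i ∈ A then walshCoeff n g A else 0 := by
  unfold walshCoeff cubeDeriv
  have hT : ∑ ε : Fin n → Bool, walsh n A ε • g (Function.update ε i (!(ε i)))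
      = (if i ∈ A then (-1:ℝ) else 1) • ∑ ε : Fin n → Bool, walsh n A ε • g ε := by
    have h0 := sum_flip i (fun ε => walsh n A ε • g (Function.update ε i (!(ε i))))
    rw [← h0, Finset.smul_sum]
    refine Finset.sum_congr rfl fun ε _ => ?_
    have hupd : Function.update (Function.update ε i (!(ε i))) i
        (!(Function.update ε i (!(ε i)) i)) = ε := by
      funext j
      by_cases hj : j = i
      · subst hj; simp
      · simp [Function.update_of_ne hj]
    rw [hupd, walsh_flip, mul_smul]
  have hmain : ∑ ε : Fin n → Bool, walsh n A ε • ((2:ℝ)⁻¹ • (g ε - g (Function.update ε i (!(ε i)))))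
      = (2:ℝ)⁻¹ • ((∑ ε : Fin n → Bool, walsh n A ε • g ε)
          - ∑ ε : Fin n → Bool, walsh n A ε • g (Function.update ε i (!(ε i)))) := by
    rw [← Finset.sum_sub_distrib, Finset.smul_sum]
    refine Finset.sum_congr rfl fun ε _ => ?_
    rw [smul_comm (walsh n A ε) ((2:ℝ)⁻¹), smul_sub]
  rw [hmain, hT]
  by_cases hi : i ∈ A
  · rw [if_pos hi, if_pos hi, neg_smul, one_smul, sub_neg_eq_add]
    congr 1
    rw [← two_smul ℝ, smul_smul]
    norm_num
  · rw [if_neg hi, if_neg hi, one_smul, sub_self, smul_zero, smul_zero]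

lemma Epi_one (k : ℕ) (g : (Fin n → Bool) → X) : Epi n 1 k g = Ei n k g := by
  unfold Epi Ei
  congr 1
  simp

lemma firstIdx_subset_succ (k : ℕ) : firstIdx n k ⊆ firstIdx n (k+1) := by
  intro j hj
  simp only [firstIdx, Finset.mem_filter, Finset.mem_univ, true_and] at hj ⊢
  omega

lemma Ei_succ_deriv (i : Fin n) (g : (Fin n → Bool) → X) :
    Ei n ((i:ℕ)+1) (cubeDeriv n i g)
      = fun ε => Ei n ((i:ℕ)+1) g ε - Ei n (i:ℕ) g ε := by
  unfold Ei
  rw [condExp_rep (firstIdx n ((i:ℕ)+1)) (cubeDeriv n i g),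
    condExp_rep (firstIdx n ((i:ℕ)+1)) g, condExp_rep (firstIdx n (i:ℕ)) g]
  funext ε
  simp only []
  rw [← Finset.sum_sub_distrib]
  refine Finset.sum_congr rfl fun A _ => ?_
  rw [walshCoeff_deriv]
  by_cases h1 : A ⊆ firstIdx n ((i:ℕ)+1)
  · by_cases h2 : i ∈ A
    · have h3 : ¬ A ⊆ firstIdx n (i:ℕ) := fun hc => by
        have h4 := hc h2
        simp [firstIdx] at h4
      simp [h1, h2, h3]
    · have h3 : A ⊆ firstIdx n (i:ℕ) := by
        intro j hj
        have h4 := h1 hj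
        simp only [firstIdx, Finset.mem_filter, Finset.mem_univ, true_and] at h4 ⊢
        have h5 : (j:ℕ) ≠ (i:ℕ) := fun he => h2 ((Fin.ext he : j = i) ▸ hj)
        omega
      simp [h1, h2, h3]
  · have h3 : ¬ A ⊆ firstIdx n (i:ℕ) := fun hc => h1 (hc.trans (firstIdx_subset_succ _))
    simp [h1, h3]

lemma Ei_deriv_zero (i : Fin n) (g : (Fin n → Bool) → X) :
    Ei n (i:ℕ) (cubeDeriv n i g) = 0 := by
  unfold Ei
  rw [condExp_rep]
  funext ε
  simp only [Pi.zero_apply]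
  refine Finset.sum_eq_zero fun A _ => ?_
  rw [walshCoeff_deriv]
  by_cases h1 : A ⊆ firstIdx n (i:ℕ)
  · have h2 : i ∉ A := fun hi => by
      have h3 := h1 hi
      simp [firstIdx] at h3
    simp [h1, h2]
  · simp [h1]

end Aux

/-- **Theorem 1 of the paper** (main inequality, several functions): if `X` is a Banach space
satisfying the hypercube Stein inequality with constant `s` and the hypercube UMD⁻ inequality
with constant `b` for exponent `p ∈ (1,∞)`, then for all `f₁,…,fₙ : 𝒞_n → X`,
`‖Σᵢ (𝔈ᵢfᵢ − 𝔈ᵢ₋₁fᵢ)‖_p ≤ s·b·(2⁻ⁿ Σ_δ ‖Σᵢ δᵢ ∂ᵢfᵢ‖_p^p)^{1/p}`. -/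
theorem pisier_umd_main (p s b : ℝ) (hp : 1 < p) (hs : 0 < s) (hb : 0 < b)
    (X : Type*) [NormedAddCommGroup X] [NormedSpace ℝ X] [CompleteSpace X]
    (hStein : SteinIneq X p s) (hUMD : UMDminusIneq X p b)
    (n : ℕ) (hn : 0 < n) (f : Fin n → (Fin n → Bool) → X) :
    cubeLpNorm n p
        (fun ε => ∑ i : Fin n, (Ei n ((i : ℕ) + 1) (f i) ε - Ei n (i : ℕ) (f i) ε))
      ≤ s * b * (((2 : ℝ) ^ n)⁻¹ * ∑ δ : Fin n → Bool,
          (cubeLpNorm n p fun ε =>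
            ∑ i : Fin n, sgn (δ i) • cubeDeriv n i (f i) ε) ^ p) ^ (1 / p) := by
  have hkey : ∀ i : Fin n, Epi n 1 ((i:ℕ)+1) (cubeDeriv n i (f i))
      = fun ε => Ei n ((i:ℕ)+1) (f i) ε - Ei n (i:ℕ) (f i) ε := fun i => by
    rw [Epi_one]; exact Ei_succ_deriv i (f i)
  have hcond : ∀ i : Fin n,
      Epi n 1 ((i:ℕ)+1) (fun ε => Ei n ((i:ℕ)+1) (f i) ε - Ei n (i:ℕ) (f i) ε)
        = (fun ε => Ei n ((i:ℕ)+1) (f i) ε - Ei n (i:ℕ) (f i) ε)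
      ∧ Epi n 1 (i:ℕ) (fun ε => Ei n ((i:ℕ)+1) (f i) ε - Ei n (i:ℕ) (f i) ε) = 0 := by
    intro i
    rw [← Ei_succ_deriv i (f i)]
    constructor
    · rw [Epi_one]
      unfold Ei
      rw [condExp_condExp, Finset.inter_self]
    · rw [Epi_one]
      unfold Ei
      rw [condExp_condExp, Finset.inter_eq_left.mpr (firstIdx_subset_succ (i:ℕ))]
      have h0 := Ei_deriv_zero i (f i)
      unfold Ei at h0
      exact h0
  have h1 := hUMD n hn 1
    (fun i ε => Ei n ((i:ℕ)+1) (f i) ε - Ei n (i:ℕ) (f i) ε) hcond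
  have h2 := hStein n hn 1 (fun i => cubeDeriv n i (f i))
  simp only [hkey] at h2
  exact le_trans h1 (le_trans (mul_le_mul_of_nonneg_left h2 hb.le) (le_of_eq (by ring)))
end
end

section
/- There exists a universal constant c > 0 such that for every positive integer n there exist functions g_1,…,g_n : 𝒞_n → {0,1}, not all identically zero, satisfying max_{ε∈𝒞_n} (Σ_{i=1}^n (𝔈_i g_i(ε))²)^{1/2} ≥ c √n · max_{ε∈𝒞_n} (Σ_{i=1}^n g_i(ε)²)^{1/2}. -/
noncomputable section

open Finset

variable {X : Type*} [NormedAddCommGroup X] [NormedSpace ℝ X]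

lemma card_fix {n : ℕ} (S : Finset (Fin n)) (v : Fin n → Bool) :
    ((univ : Finset (Fin n → Bool)).filter fun η => ∀ j ∈ S, η j = v j).card
      = 2 ^ (n - S.card) := by
  have h : ((univ : Finset (Fin n → Bool)).filter fun η => ∀ j ∈ S, η j = v j)
      = Fintype.piFinset (fun j => if j ∈ S then {v j} else (univ : Finset Bool)) := by
    ext η
    simp only [mem_filter, mem_univ, true_and, Fintype.mem_piFinset]
    constructor
    · intro hh j
      by_cases hj : j ∈ S
      · simp [hj, hh j hj]
      · simp [hj]
    · intro hh j hj
      simpa [hj] using hh j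
  rw [h, Fintype.card_piFinset]
  calc ∏ j : Fin n, (if j ∈ S then ({v j} : Finset Bool) else univ).card
      = ∏ j ∈ (univ : Finset (Fin n)).filter (fun j => ¬ j ∈ S), 2 := by
        rw [Finset.prod_filter]
        apply Finset.prod_congr rfl
        intro j _
        by_cases hj : j ∈ S <;> simp [hj]
    _ = 2 ^ ((univ : Finset (Fin n)).filter (fun j => ¬ j ∈ S)).card := by
        rw [Finset.prod_const]
    _ = 2 ^ (n - S.card) := by
        congr 1
        rw [Finset.filter_not, Finset.card_sdiff_of_subset (Finset.filter_subset _ _),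
          Finset.filter_mem_eq_inter, Finset.univ_inter, Finset.card_univ,
          Fintype.card_fin]

lemma card_firstIdx (n k : ℕ) : (firstIdx n k).card = min k n := by
  have h : firstIdx n k = Finset.attachFin (Finset.range (min k n))
      (fun m hm => lt_of_lt_of_le (Finset.mem_range.mp hm) (min_le_right _ _)) := by
    ext j
    have := j.isLt
    simp only [firstIdx, mem_filter, mem_univ, true_and, Finset.mem_attachFin,
      Finset.mem_range]
    omega
  rw [h, Finset.card_attachFin, Finset.card_range]

/-- Stein's example functions. -/
def gfun (n : ℕ) (i : Fin n) (ε : Fin n → Bool) : ℝ :=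
  if ∀ j : Fin n, (j : ℕ) ≤ (i : ℕ) + 1 → ε j = decide ((j : ℕ) ≤ (i : ℕ)) then 1 else 0

lemma Ei_gfun (n : ℕ) (i : Fin n) :
    Ei n ((i : ℕ) + 1) (gfun n i) (fun _ => true)
      = ((2 : ℝ) ^ (n - ((i : ℕ) + 1)))⁻¹ * 2 ^ (n - ((i : ℕ) + 2)) := by
  have hi := i.isLt
  rw [Ei, cubeCondExp, card_firstIdx, smul_eq_mul]
  congr 1
  · congr 2
    omega
  have hsum : (∑ η ∈ univ.filter
        (fun η : Fin n → Bool => ∀ j ∈ firstIdx n ((i : ℕ) + 1), η j = (fun _ => true) j),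
        gfun n i η)
      = (((univ : Finset (Fin n → Bool)).filter
          (fun η => ∀ j ∈ firstIdx n ((i : ℕ) + 2), η j = (fun j : Fin n => decide ((j : ℕ) ≤ (i : ℕ))) j)).card : ℝ) := by
    simp only [gfun]
    rw [Finset.sum_boole, Finset.filter_filter]
    congr 2
    ext η
    simp only [firstIdx, mem_filter, mem_univ, true_and]
    constructor
    · rintro ⟨h1, h2⟩ j hj
      exact h2 j (by omega)
    · intro h
      refine ⟨fun j hj => ?_, fun j hj => h j (by omega)⟩
      have h2 := h j (by omega)
      have h3 : ((j : ℕ) ≤ (i : ℕ)) := by omega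
      simp [h3] at h2
      exact h2
  rw [hsum, card_fix, card_firstIdx]
  have : n - min ((i : ℕ) + 2) n = n - ((i : ℕ) + 2) := by omega
  rw [this]
  push_cast
  ring

lemma gfun_vals (n : ℕ) (i : Fin n) (ε : Fin n → Bool) : gfun n i ε = 0 ∨ gfun n i ε = 1 := by
  rw [gfun]; split_ifs <;> simp

lemma gfun_disjoint {n : ℕ} {i k : Fin n} {ε : Fin n → Bool}
    (hi : gfun n i ε ≠ 0) (hk : gfun n k ε ≠ 0) : i = k := by
  have key : ∀ a b : Fin n, gfun n a ε ≠ 0 → gfun n b ε ≠ 0 → ¬ ((a : ℕ) < (b : ℕ)) := by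
    intro a b ha hb hab
    rw [gfun] at ha hb
    split_ifs at ha hb with h1 h2
    rotate_left
    · exact hb rfl
    · exact ha rfl
    · exact ha rfl
    have hj : (a : ℕ) + 1 < n := by have := b.isLt; omega
    have e1 := h1 ⟨(a : ℕ) + 1, hj⟩ (by simp)
    have e2 := h2 ⟨(a : ℕ) + 1, hj⟩ (by simp; omega)
    simp only [] at e1 e2
    rw [e1] at e2
    have h3 : ¬ ((a : ℕ) + 1 ≤ (a : ℕ)) := by omega
    have h4 : ((a : ℕ) + 1 ≤ (b : ℕ)) := by omega
    simp [h3, h4] at e2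
  have := key i k hi hk
  have := key k i hk hi
  exact Fin.ext (by omega)

lemma gfun_sum_le (n : ℕ) (ε : Fin n → Bool) : ∑ i : Fin n, (gfun n i ε) ^ 2 ≤ 1 := by
  have h1 : ∑ i : Fin n, (gfun n i ε) ^ 2
      = (((univ : Finset (Fin n)).filter fun i => gfun n i ε ≠ 0).card : ℝ) := by
    rw [Finset.card_eq_sum_ones, Nat.cast_sum, Finset.sum_filter]
    apply Finset.sum_congr rfl
    intro i _
    rcases gfun_vals n i ε with h | h <;> simp [h]
  rw [h1]
  have h2 : ((univ : Finset (Fin n)).filter fun i => gfun n i ε ≠ 0).card ≤ 1 := by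
    apply Finset.card_le_one.2
    intro a ha b hb
    simp only [mem_filter] at ha hb
    exact gfun_disjoint ha.2 hb.2
  exact_mod_cast h2

lemma Ei_gfun_ge (n : ℕ) (i : Fin n) :
    (1 : ℝ) / 2 ≤ Ei n ((i : ℕ) + 1) (gfun n i) (fun _ => true) := by
  rw [Ei_gfun]
  rw [inv_mul_eq_div, le_div_iff₀ (by positivity)]
  have h : (2 : ℝ) ^ (n - ((i : ℕ) + 1)) ≤ 2 ^ ((n - ((i : ℕ) + 2)) + 1) := by
    apply pow_le_pow_right₀ (by norm_num)
    omega
  rw [pow_succ] at h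
  linarith


/-- Stein's example: there is a universal `c > 0` such that for every `n` there are
`{0,1}`-valued functions `g₁,…,gₙ` on the cube, not all identically zero, with
`max_ε (Σᵢ (𝔈ᵢgᵢ(ε))²)^{1/2} ≥ c √n · max_ε (Σᵢ gᵢ(ε)²)^{1/2}`. -/
theorem stein_example_Linfty :
    ∃ c : ℝ, 0 < c ∧ ∀ n : ℕ, 0 < n →
      ∃ g : Fin n → (Fin n → Bool) → ℝ,
        (∀ (i : Fin n) (ε : Fin n → Bool), g i ε = 0 ∨ g i ε = 1) ∧
        (∃ (i : Fin n) (ε : Fin n → Bool), g i ε ≠ 0) ∧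
        (Finset.univ.sup' Finset.univ_nonempty fun ε : Fin n → Bool =>
            Real.sqrt (∑ i : Fin n, (Ei n ((i : ℕ) + 1) (g i) ε) ^ 2))
          ≥ c * Real.sqrt n *
            (Finset.univ.sup' Finset.univ_nonempty fun ε : Fin n → Bool =>
              Real.sqrt (∑ i : Fin n, (g i ε) ^ 2)) := by
  refine ⟨1/2, by norm_num, fun n hn => ⟨gfun n, gfun_vals n, ?_, ?_⟩⟩
  · refine ⟨⟨0, hn⟩, (fun j => decide ((j : ℕ) ≤ 0)), ?_⟩
    rw [gfun, if_pos (fun j _ => rfl)]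
    norm_num
  · have hR : (Finset.univ.sup' Finset.univ_nonempty fun ε : Fin n → Bool =>
        Real.sqrt (∑ i : Fin n, (gfun n i ε) ^ 2)) ≤ 1 := by
      apply Finset.sup'_le
      intro ε _
      exact Real.sqrt_le_one.2 (gfun_sum_le n ε)
    have hterm : ∀ i : Fin n,
        (1/4 : ℝ) ≤ (Ei n ((i : ℕ) + 1) (gfun n i) (fun _ => true)) ^ 2 := by
      intro i
      have h := Ei_gfun_ge n i
      nlinarith
    have hsum : (n : ℝ) * (1/4) ≤
        ∑ i : Fin n, (Ei n ((i : ℕ) + 1) (gfun n i) (fun _ => true)) ^ 2 := by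
      have := Finset.card_nsmul_le_sum Finset.univ
        (fun i : Fin n => (Ei n ((i : ℕ) + 1) (gfun n i) (fun _ => true)) ^ 2)
        (1/4 : ℝ) (fun i _ => hterm i)
      simpa [nsmul_eq_mul] using this
    have hL : Real.sqrt n / 2 ≤
        (Finset.univ.sup' Finset.univ_nonempty fun ε : Fin n → Bool =>
          Real.sqrt (∑ i : Fin n, (Ei n ((i : ℕ) + 1) (gfun n i) ε) ^ 2)) := by
      refine le_trans ?_ (Finset.le_sup' _ (Finset.mem_univ (fun _ => true)))
      have h4 : Real.sqrt ((n : ℝ) * (1/4)) = Real.sqrt n / 2 := by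
        rw [show (n : ℝ) * (1/4) = (n : ℝ) / 2^2 by ring,
          Real.sqrt_div (by positivity), Real.sqrt_sq (by norm_num)]
      rw [← h4]
      exact Real.sqrt_le_sqrt hsum
    calc (1/2 : ℝ) * Real.sqrt n *
          (Finset.univ.sup' Finset.univ_nonempty fun ε : Fin n → Bool =>
            Real.sqrt (∑ i : Fin n, (gfun n i ε) ^ 2))
        ≤ (1/2 : ℝ) * Real.sqrt n * 1 := by
          apply mul_le_mul_of_nonneg_left hR (by positivity)
      _ = Real.sqrt n / 2 := by ring
      _ ≤ _ := hL
end
end
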